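/- The operations x ▷ y = 2x + 2y + 2 and x ▷̄ y = x + 2 on ZMod 3 form a biquandle: (1) x ▷ x = x ▷̄ x for all x; (2) for each y the maps x ↦ x ▷̄ y and x ↦ x ▷ y are bijections of ZMod 3 and the map (x, y) ↦ (y ▷̄ x, x ▷ y) is a bijection of (ZMod 3) × (ZMod 3); (3) for all x, y, z the exchange laws (x ▷ y) ▷ (z ▷ y) = (x ▷ z) ▷ (y ▷̄ z), (x ▷ y) ▷̄ (z ▷ y) = (x ▷̄ z) ▷ (y ▷̄ z), and (x ▷̄ y) ▷̄ (z ▷̄ y) = (x ▷̄ z) ▷̄ (y ▷ z) hold. -/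

import Mathlib

/-- The underoperation `x ▷ y`. -/
def biqOp (x y : ZMod 3) : ZMod 3 := 2 * x + 2 * y + 2

/-- The overoperation `x ▷̄ y`. -/
def biqOpBar (x y : ZMod 3) : ZMod 3 := x + 2

/-!
Since `2 = -1` in `ZMod 3`, the operations are the affine maps `x ▷ y = -(x + y + 1)` and
`x ▷̄ y = x - 1`. In these normal forms every axiom is a polynomial identity up to a multiple
of `3`, and the bijections are a translation, an involution, and an injective self-map of a
finite set.
-/

lemma ZMod.three_eq_zero : (3 : ZMod 3) = 0 := rfl

lemma biqOp_eq_neg (x y : ZMod 3) : biqOp x y = -(x + y + 1) := by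
  unfold biqOp
  linear_combination (x + y + 1) * ZMod.three_eq_zero

lemma biqOpBar_eq_sub_one (x y : ZMod 3) : biqOpBar x y = x - 1 := by
  unfold biqOpBar
  linear_combination ZMod.three_eq_zero

lemma biqOp_self (x : ZMod 3) : biqOp x x = biqOpBar x x := by
  rw [biqOp_eq_neg, biqOpBar_eq_sub_one]
  linear_combination -x * ZMod.three_eq_zero

lemma biqOpBar_left_bijective (y : ZMod 3) : Function.Bijective (fun x => biqOpBar x y) := by
  simp only [biqOpBar_eq_sub_one]
  exact (Equiv.subRight 1).bijective

lemma biqOp_left_involutive (y : ZMod 3) : Function.Involutive (fun x => biqOp x y) := by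
  intro x
  simp only [biqOp_eq_neg]
  ring

lemma biqOp_switch_injective :
    Function.Injective (fun p : ZMod 3 × ZMod 3 => (biqOpBar p.2 p.1, biqOp p.1 p.2)) := by
  rintro ⟨x, y⟩ ⟨x', y'⟩ h
  simp only [biqOp_eq_neg, biqOpBar_eq_sub_one, Prod.mk.injEq] at h
  obtain ⟨hy, hx⟩ := h
  have hy' : y = y' := sub_left_injective hy
  subst hy'
  simp only [Prod.mk.injEq, and_true]
  linear_combination -hx

lemma biqOp_exchange (x y z : ZMod 3) :
    biqOp (biqOp x y) (biqOp z y) = biqOp (biqOp x z) (biqOpBar y z) := by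
  simp only [biqOp_eq_neg, biqOpBar_eq_sub_one]
  linear_combination y * ZMod.three_eq_zero

lemma biqOpBar_biqOp_exchange (x y z : ZMod 3) :
    biqOpBar (biqOp x y) (biqOp z y) = biqOp (biqOpBar x z) (biqOpBar y z) := by
  simp only [biqOp_eq_neg, biqOpBar_eq_sub_one]
  linear_combination -ZMod.three_eq_zero

lemma biqOpBar_exchange (x y z : ZMod 3) :
    biqOpBar (biqOpBar x y) (biqOpBar z y) = biqOpBar (biqOpBar x z) (biqOp y z) := by
  simp only [biqOpBar_eq_sub_one]

/-- These operations satisfy all the biquandle axioms. -/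
theorem zmod3_table_biquandle :
    (∀ x, biqOp x x = biqOpBar x x) ∧
    (∀ y, Function.Bijective (fun x => biqOpBar x y)) ∧
    (∀ y, Function.Bijective (fun x => biqOp x y)) ∧
    Function.Bijective
      (fun p : ZMod 3 × ZMod 3 => (biqOpBar p.2 p.1, biqOp p.1 p.2)) ∧
    (∀ x y z, biqOp (biqOp x y) (biqOp z y) = biqOp (biqOp x z) (biqOpBar y z)) ∧
    (∀ x y z, biqOpBar (biqOp x y) (biqOp z y) = biqOp (biqOpBar x z) (biqOpBar y z)) ∧
    (∀ x y z, biqOpBar (biqOpBar x y) (biqOpBar z y) = biqOpBar (biqOpBar x z) (biqOp y z)) :=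
  ⟨biqOp_self, biqOpBar_left_bijective, fun y => (biqOp_left_involutive y).bijective,
    Finite.injective_iff_bijective.mp biqOp_switch_injective, biqOp_exchange,
    biqOpBar_biqOp_exchange, biqOpBar_exchange⟩
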